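/- arXiv:1808.06905 — 3 statements merged into one kernel-verified Lean document; each statement's English description precedes it below -/
import Mathlib

section
/- For every n ≥ 2, the derivation V″ of ℂ[z₁,…,zₙ] is locally nilpotent: for every polynomial p there exists m ∈ ℕ such that the m-fold iterate of V″ applied to p is 0. -/
open MvPolynomial

/-- The polynomial vector field `f ∂/∂zₖ`: the derivation of `ℂ[z₁,…,zₙ]`
sending the coordinate `zₖ` to `f` and all other coordinates to `0`. -/
noncomputable def der (n : ℕ) (f : MvPolynomial (Fin n) ℂ) (k : Fin n) :
    Derivation ℂ (MvPolynomial (Fin n) ℂ) (MvPolynomial (Fin n) ℂ) :=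
  MvPolynomial.mkDerivation ℂ (Pi.single k f)

/-- `V″ = ∂/∂z₁ + z₁⁵ ∂/∂z₂ + z₁² z₂⁵ ∂/∂z₃ + ⋯ + z₁² z₂² ⋯ z_{n−2}² z_{n−1}⁵ ∂/∂zₙ`,
i.e. `V″(z₁) = 1` and `V″(zₖ) = z₁² z₂² ⋯ z_{k−2}² · z_{k−1}⁵` for `2 ≤ k ≤ n`. -/
noncomputable def V'' (n : ℕ) :
    Derivation ℂ (MvPolynomial (Fin n) ℂ) (MvPolynomial (Fin n) ℂ) :=
  MvPolynomial.mkDerivation ℂ (fun i =>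
    if h : 0 < (i : ℕ) then
      (∏ j ∈ Finset.univ.filter (fun j : Fin n => (j : ℕ) < (i : ℕ) - 1), (X j) ^ 2) *
        (X (⟨(i : ℕ) - 1, lt_of_le_of_lt (Nat.sub_le _ _) i.isLt⟩ : Fin n)) ^ 5
    else 1)

namespace VAux

variable {n : ℕ}

/-- Weight of a monomial exponent: variable `i` has weight `8^i`. -/
def W (s : Fin n →₀ ℕ) : ℕ := ∑ i : Fin n, s i * 8 ^ (i : ℕ)

lemma W_add (a b : Fin n →₀ ℕ) : W (a + b) = W a + W b := by
  simp [W, add_mul, Finset.sum_add_distrib]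

lemma W_single (i : Fin n) (k : ℕ) : W (Finsupp.single i k) = k * 8 ^ (i : ℕ) := by
  classical
  rw [W, Finset.sum_eq_single i]
  · simp
  · intro j _ hj
    simp [Finsupp.single_apply, Ne.symm hj]
  · simp

/-- All exponents in the support of `q` satisfy `P`. -/
def SB (P : (Fin n →₀ ℕ) → Prop) (q : MvPolynomial (Fin n) ℂ) : Prop :=
  ∀ s ∈ q.support, P s

lemma SB_mono {P Q : (Fin n →₀ ℕ) → Prop} {q} (h : SB P q) (hPQ : ∀ s, P s → Q s) :
    SB Q q := fun s hs => hPQ s (h s hs)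

lemma SB_zero (P : (Fin n →₀ ℕ) → Prop) : SB P (0 : MvPolynomial (Fin n) ℂ) := by
  intro s hs; simp at hs

lemma SB_add {P : (Fin n →₀ ℕ) → Prop} {p q : MvPolynomial (Fin n) ℂ}
    (hp : SB P p) (hq : SB P q) : SB P (p + q) := by
  classical
  intro s hs
  rcases Finset.mem_union.1 (MvPolynomial.support_add hs) with h | h
  · exact hp s h
  · exact hq s h

lemma SB_sum {P : (Fin n →₀ ℕ) → Prop} {ι : Type*} {F : Finset ι}
    {g : ι → MvPolynomial (Fin n) ℂ} (h : ∀ j ∈ F, SB P (g j)) :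
    SB P (∑ j ∈ F, g j) := by
  classical
  induction F using Finset.cons_induction with
  | empty => simpa using SB_zero P
  | cons a F ha ih =>
    rw [Finset.sum_cons]
    exact SB_add (h a (Finset.mem_cons_self a F)) (ih fun j hj => h j (Finset.mem_cons_of_mem hj))

lemma SB_smul {P : (Fin n →₀ ℕ) → Prop} {q : MvPolynomial (Fin n) ℂ} (c : ℂ)
    (h : SB P q) : SB P (c • q) := fun s hs => h s (MvPolynomial.support_smul hs)

lemma SB_mul {a b : ℕ} {p q : MvPolynomial (Fin n) ℂ}
    (hp : SB (fun s => W s ≤ a) p) (hq : SB (fun s => W s ≤ b) q) :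
    SB (fun s => W s ≤ a + b) (p * q) := by
  classical
  intro s hs
  obtain ⟨u, hu, v, hv, rfl⟩ := Finset.mem_add.1 (MvPolynomial.support_mul p q hs)
  rw [W_add]
  exact add_le_add (hp u hu) (hq v hv)

lemma SB_monomial (t : Fin n →₀ ℕ) (c : ℂ) :
    SB (fun s => W s ≤ W t) (monomial t c) := by
  intro s hs
  rw [Finset.mem_singleton.1 (MvPolynomial.support_monomial_subset hs)]

lemma SB_X (i : Fin n) : SB (fun s => W s ≤ 8 ^ (i : ℕ)) (X i : MvPolynomial (Fin n) ℂ) := by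
  intro s hs
  rw [MvPolynomial.support_X, Finset.mem_singleton] at hs
  subst hs
  rw [W_single]; omega

lemma SB_one : SB (fun s => W s ≤ 0) (1 : MvPolynomial (Fin n) ℂ) := by
  intro s hs
  rw [MvPolynomial.mem_support_iff] at hs
  have : s = 0 := by
    by_contra h
    exact hs (by rw [show (1 : MvPolynomial (Fin n) ℂ) = C 1 from rfl, coeff_C, if_neg (Ne.symm h)])
  subst this
  simp [W]

lemma SB_pow {b : ℕ} {q : MvPolynomial (Fin n) ℂ} (h : SB (fun s => W s ≤ b) q) (m : ℕ) :
    SB (fun s => W s ≤ m * b) (q ^ m) := by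
  induction m with
  | zero => simpa using SB_one
  | succ m ih =>
    rw [pow_succ, Nat.succ_mul]
    exact SB_mul ih h

lemma geo (k : ℕ) : 2 * (∑ m ∈ Finset.range k, 8 ^ m) + 1 ≤ 8 ^ k := by
  induction k with
  | zero => simp
  | succ k ih =>
    rw [Finset.sum_range_succ, pow_succ]
    omega

/-- The coefficient vector field of `V''` has weight at most `8^i - 1` at index `i`. -/
lemma SB_f (n : ℕ) (i : Fin n) :
    SB (fun s => W s ≤ 8 ^ (i : ℕ) - 1)
      (if h : 0 < (i : ℕ) then
        (∏ j ∈ Finset.univ.filter (fun j : Fin n => (j : ℕ) < (i : ℕ) - 1), (X j) ^ 2) *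
          (X (⟨(i : ℕ) - 1, lt_of_le_of_lt (Nat.sub_le _ _) i.isLt⟩ : Fin n)) ^ 5
      else 1) := by
  classical
  split_ifs with h
  · set k := (i : ℕ) - 1 with hk
    have hkn : k < n := lt_of_le_of_lt (Nat.sub_le _ _) i.isLt
    have h1 : SB (fun s => W s ≤ ∑ j ∈ Finset.univ.filter (fun j : Fin n => (j : ℕ) < k),
        2 * 8 ^ (j : ℕ))
        (∏ j ∈ Finset.univ.filter (fun j : Fin n => (j : ℕ) < k), (X j : MvPolynomial (Fin n) ℂ) ^ 2) := by
      induction (Finset.univ.filter (fun j : Fin n => (j : ℕ) < k)) using Finset.cons_induction with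
      | empty => simpa using SB_one
      | cons a F ha ih =>
        rw [Finset.prod_cons, Finset.sum_cons]
        exact SB_mul (SB_pow (SB_X a) 2) ih
    have h2 : SB (fun s => W s ≤ 5 * 8 ^ k)
        ((X (⟨k, hkn⟩ : Fin n) : MvPolynomial (Fin n) ℂ) ^ 5) := SB_pow (SB_X _) 5
    refine SB_mono (SB_mul h1 h2) ?_
    intro s hs
    refine hs.trans ?_
    have hsum : ∑ j ∈ Finset.univ.filter (fun j : Fin n => (j : ℕ) < k), 2 * 8 ^ (j : ℕ)
        = ∑ m ∈ Finset.range k, 2 * 8 ^ m := by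
      rw [Finset.sum_filter,
        Fin.sum_univ_eq_sum_range (fun m => if m < k then 2 * 8 ^ m else 0) n,
        ← Finset.sum_filter]
      congr 1
      ext m
      simp only [Finset.mem_filter, Finset.mem_range]
      omega
    rw [hsum]
    have hgeo := geo k
    rw [Finset.mul_sum] at hgeo
    have hik : (i : ℕ) = k + 1 := by omega
    rw [hik, pow_succ]
    omega
  · exact SB_mono SB_one (by intro s hle; omega)

lemma key (d : ℕ) (s' : Fin n →₀ ℕ) (hs' : W s' ≤ d) (c : ℂ) :
    SB (fun s => W s + 1 ≤ d) (V'' n ((monomial s') c)) := by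
  classical
  rw [V'', MvPolynomial.mkDerivation_monomial]
  apply SB_smul
  rw [Finsupp.sum]
  apply SB_sum
  intro i hi
  rw [smul_eq_mul]
  have h1 := SB_monomial (n := n) (s' - Finsupp.single i 1) ((s' i : ℕ) : ℂ)
  have h2 := SB_f n i
  refine SB_mono (SB_mul h1 h2) ?_
  intro s hle
  have hsi : 1 ≤ s' i := Nat.one_le_iff_ne_zero.2 (Finsupp.mem_support_iff.1 hi)
  have hle' : Finsupp.single i 1 ≤ s' := Finsupp.single_le_iff.2 hsi
  have hW : W (s' - Finsupp.single i 1) + 8 ^ (i : ℕ) = W s' := by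
    have := tsub_add_cancel_of_le hle'
    calc W (s' - Finsupp.single i 1) + 8 ^ (i : ℕ)
        = W (s' - Finsupp.single i 1) + W (Finsupp.single i 1) := by rw [W_single]; ring_nf
      _ = W ((s' - Finsupp.single i 1) + Finsupp.single i 1) := (W_add _ _).symm
      _ = W s' := by rw [this]
  have h8 : 1 ≤ 8 ^ (i : ℕ) := Nat.one_le_pow _ _ (by norm_num)
  omega

lemma step (d : ℕ) (p : MvPolynomial (Fin n) ℂ) (hp : ∀ s ∈ p.support, W s ≤ d) :
    ∀ s ∈ (V'' n p).support, W s + 1 ≤ d := by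
  have hrw : V'' n p = ∑ s' ∈ p.support, V'' n ((monomial s') (coeff s' p)) := by
    conv_lhs => rw [p.as_sum]
    rw [map_sum]
  rw [hrw]
  exact SB_sum fun s' hs' => key d s' (hp s' hs') _

lemma main (d : ℕ) : ∀ p : MvPolynomial (Fin n) ℂ,
    (∀ s ∈ p.support, W s ≤ d) → (fun q => V'' n q)^[d + 1] p = 0 := by
  induction d with
  | zero =>
    intro p hp
    have h := step 0 p hp
    have : (V'' n p).support = ∅ := by
      rw [Finset.eq_empty_iff_forall_notMem]
      intro s hs
      exact absurd (h s hs) (by omega)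
    simpa [Function.iterate_one] using MvPolynomial.support_eq_empty.1 this
  | succ d ih =>
    intro p hp
    rw [Function.iterate_succ_apply]
    exact ih (V'' n p) fun s hs => by have := step (d + 1) p hp s hs; omega

end VAux

/-- For every `n ≥ 2`, the derivation `V″` is locally nilpotent. -/
theorem V''_locallyNilpotent (n : ℕ) (hn : 2 ≤ n) (p : MvPolynomial (Fin n) ℂ) :
    ∃ m : ℕ, (fun q => V'' n q)^[m] p = 0 := by
  refine ⟨p.support.sup VAux.W + 1, VAux.main _ p fun s hs => Finset.le_sup hs⟩
end

section
/- For every n ≥ 2 and every k with 2 ≤ k ≤ n, the derivation zₙ z_{n−1} ⋯ zₖ ∂/∂z_{k−1} belongs to the smallest Lie subalgebra of the derivations of ℂ[z₁,…,zₙ] containing U, V and W. -/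
open MvPolynomial

/-- `U = ∂/∂zₙ`  (coordinates are `0`-indexed: `zₖ = X ⟨k-1,_⟩`). -/
noncomputable def U (n : ℕ) :
    Derivation ℂ (MvPolynomial (Fin n) ℂ) (MvPolynomial (Fin n) ℂ) :=
  MvPolynomial.mkDerivation ℂ (fun i => if (i : ℕ) = n - 1 then 1 else 0)

/-- `V = ∂/∂zₙ + zₙ³ ∂/∂z_{n−1} + zₙ z_{n−1}³ ∂/∂z_{n−2} + ⋯ + zₙ z_{n−1} ⋯ z₃ z₂³ ∂/∂z₁`,
i.e. `V(zₙ) = 1` and `V(zₖ) = zₙ z_{n−1} ⋯ z_{k+2} · z_{k+1}³` for `1 ≤ k ≤ n−1`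
(in `0`-indexed coordinates: `V(X i) = (∏_{j > i+1} X j) * (X (i+1))³` for `i + 1 < n`). -/
noncomputable def V (n : ℕ) :
    Derivation ℂ (MvPolynomial (Fin n) ℂ) (MvPolynomial (Fin n) ℂ) :=
  MvPolynomial.mkDerivation ℂ (fun i =>
    if h : (i : ℕ) + 1 < n then
      (∏ j ∈ Finset.univ.filter (fun j : Fin n => (i : ℕ) + 1 < (j : ℕ)), X j) *
        (X (⟨(i : ℕ) + 1, h⟩ : Fin n)) ^ 3
    else 1)

/-- `W = z₁² ⋯ z_{n−1}² zₙ ∂/∂zₙ`. -/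
noncomputable def W (n : ℕ) :
    Derivation ℂ (MvPolynomial (Fin n) ℂ) (MvPolynomial (Fin n) ℂ) :=
  MvPolynomial.mkDerivation ℂ (fun i =>
    if (i : ℕ) = n - 1 then
      (∏ j ∈ Finset.univ.filter (fun j : Fin n => (j : ℕ) < n - 1), (X j) ^ 2) * X i
    else 0)

/-!
Write `∂ₖ = ∂/∂zₖ` and `E = V − U`. Among the coefficients of `E`, only
`E(z_{k−1}) = zₙ ⋯ z_{k+1} · zₖ³` has degree above one in `zₖ`, so
`⁅∂ₖ, ⁅∂ₖ, E⁆⁆ = 6 zₙ ⋯ zₖ ∂_{k−1}`, and it remains to see that `∂ₖ` lies in the span.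
This holds by downward induction from `∂ₙ = U`: bracketing `zₙ ⋯ zₖ ∂_{k−1}` successively
with `∂ₖ, …, ∂ₙ` removes the square-free monomial and leaves `∂_{k−1}`.
-/

namespace MvPolynomial

variable {R σ : Type*}

section CommSemiring

variable [CommSemiring R]

theorem pderiv_prod_X_of_notMem {t : σ} {s : Finset σ} (h : t ∉ s) :
    pderiv t (∏ j ∈ s, (X j : MvPolynomial σ R)) = 0 :=
  Finset.prod_induction _ (fun f => pderiv t f = 0) (fun f g hf hg => by simp [hf, hg])
    pderiv_one fun _ hj => pderiv_X_of_ne (ne_of_mem_of_not_mem hj h)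

theorem pderiv_prod_X_of_mem [DecidableEq σ] {t : σ} {s : Finset σ} (h : t ∈ s) :
    pderiv t (∏ j ∈ s, (X j : MvPolynomial σ R)) = ∏ j ∈ s.erase t, X j := by
  rw [← Finset.mul_prod_erase s _ h, Derivation.leibniz,
    pderiv_prod_X_of_notMem (Finset.notMem_erase t s), pderiv_X_self]
  simp

theorem pderiv_pderiv_prod_X (t : σ) (s : Finset σ) :
    pderiv t (pderiv t (∏ j ∈ s, (X j : MvPolynomial σ R))) = 0 := by
  classical
  by_cases h : t ∈ s
  · rw [pderiv_prod_X_of_mem h, pderiv_prod_X_of_notMem (Finset.notMem_erase t s)]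
  · rw [pderiv_prod_X_of_notMem h, map_zero]

theorem pderiv_pderiv_prod_X_mul_X_pow_three [DecidableEq σ] {t : σ} {s : Finset σ}
    (h : t ∉ s) :
    pderiv t (pderiv t ((∏ j ∈ s, X j) * X t ^ 3)) =
      6 * ∏ j ∈ insert t s, (X j : MvPolynomial σ R) := by
  have hcube : pderiv t (pderiv t (X t ^ 3)) = (6 * X t : MvPolynomial σ R) := by
    rw [Derivation.leibniz_pow, pderiv_X_self, smul_eq_mul, mul_one, map_nsmul,
      Derivation.leibniz_pow, pderiv_X_self, smul_eq_mul, mul_one, smul_smul, nsmul_eq_mul]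
    norm_num
  rw [pderiv_mul, pderiv_prod_X_of_notMem h, zero_mul, zero_add, pderiv_mul,
    pderiv_prod_X_of_notMem h, zero_mul, zero_add, hcube, Finset.prod_insert h]
  ring

end CommSemiring

section CommRing

variable [CommRing R]

theorem lie_pderiv_apply_X (s i : σ) (D : Derivation R (MvPolynomial σ R) (MvPolynomial σ R)) :
    ⁅pderiv (R := R) s, D⁆ (X i) = pderiv s (D (X i)) := by
  classical
  rw [Derivation.commutator_apply, pderiv_X, Pi.single_apply]
  split <;> simp

theorem lie_pderiv_mkDerivation_single [DecidableEq σ] (s m : σ) (f : MvPolynomial σ R) :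
    ⁅pderiv (R := R) s, mkDerivation R (Pi.single m f)⁆ =
      mkDerivation R (Pi.single m (pderiv s f)) := by
  refine derivation_ext fun i => ?_
  rw [lie_pderiv_apply_X, mkDerivation_X, mkDerivation_X, Pi.single_apply, Pi.single_apply]
  split <;> simp

theorem pderiv_mem_of_mkDerivation_prod_X_mem [DecidableEq σ]
    {S : LieSubalgebra R (Derivation R (MvPolynomial σ R) (MvPolynomial σ R))} {m : σ}
    (s : Finset σ) (hs : ∀ j ∈ s, pderiv j ∈ S)
    (h : mkDerivation R (Pi.single m (∏ j ∈ s, X j)) ∈ S) : pderiv m ∈ S := by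
  induction s using Finset.induction with
  | empty => rwa [Finset.prod_empty, ← pderiv_def] at h
  | insert a s ha ih =>
    refine ih (fun j hj => hs j (Finset.mem_insert_of_mem hj)) ?_
    have h' := S.lie_mem (hs a (Finset.mem_insert_self a s)) h
    rwa [lie_pderiv_mkDerivation_single, pderiv_prod_X_of_mem (Finset.mem_insert_self a s),
      Finset.erase_insert ha] at h'

end CommRing

end MvPolynomial

variable {n : ℕ}

theorem U_eq_pderiv (m : Fin n) (hm : (m : ℕ) + 1 = n) : U n = pderiv m := by
  refine derivation_ext fun i => ?_
  rw [U, mkDerivation_X, pderiv_X, Pi.single_apply]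
  congr 1
  simp only [eq_iff_iff, Fin.ext_iff]
  omega

theorem V_sub_U_apply_X (i : Fin n) :
    (V n - U n) (X i) =
      if h : (i : ℕ) + 1 < n then
        (∏ j ∈ Finset.univ.filter (fun j : Fin n => (i : ℕ) + 1 < (j : ℕ)), X j) *
          X (⟨(i : ℕ) + 1, h⟩ : Fin n) ^ 3
      else 0 := by
  rw [Derivation.sub_apply, U, V, mkDerivation_X, mkDerivation_X]
  split_ifs <;> first | omega | simp

theorem lie_pderiv_lie_pderiv_V_sub_U (m t : Fin n) (hmt : (t : ℕ) = m + 1) :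
    ⁅pderiv (R := ℂ) t, ⁅pderiv (R := ℂ) t, V n - U n⁆⁆ =
      (6 : ℂ) • der n (∏ j ∈ Finset.univ.filter (fun j : Fin n => (t : ℕ) ≤ (j : ℕ)), X j) m := by
  refine derivation_ext fun i => ?_
  rw [lie_pderiv_apply_X, lie_pderiv_apply_X, V_sub_U_apply_X, Derivation.smul_apply, der,
    mkDerivation_X, Pi.single_apply]
  split_ifs with hi him him
  · subst him
    rw [show (⟨(i : ℕ) + 1, hi⟩ : Fin n) = t from Fin.ext hmt.symm, ← hmt,
      pderiv_pderiv_prod_X_mul_X_pow_three (by simp), smul_eq_C_mul, map_ofNat]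
    congr 2
    ext j
    simp only [Finset.mem_filter, Finset.mem_univ, true_and, Finset.mem_insert, Fin.ext_iff]
    omega
  · have ht : (⟨(i : ℕ) + 1, hi⟩ : Fin n) ≠ t :=
      Fin.ne_of_val_ne fun h => him (Fin.ext (by simp only at h; omega))
    simp [Derivation.leibniz, Derivation.leibniz_pow, pderiv_X_of_ne ht, pderiv_pderiv_prod_X]
  · subst him
    exact absurd (hmt ▸ t.isLt) hi
  · simp

section SubalgebraContainingUV

variable {S : LieSubalgebra ℂ (Derivation ℂ (MvPolynomial (Fin n) ℂ) (MvPolynomial (Fin n) ℂ))}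

theorem der_tail_prod_mem_of_pderiv_mem (hU : U n ∈ S) (hV : V n ∈ S) (m t : Fin n)
    (hmt : (t : ℕ) = m + 1) (ht : pderiv t ∈ S) :
    der n (∏ j ∈ Finset.univ.filter (fun j : Fin n => (t : ℕ) ≤ (j : ℕ)), X j) m ∈ S := by
  have h6 := S.lie_mem ht (S.lie_mem ht (S.sub_mem hV hU))
  rw [lie_pderiv_lie_pderiv_V_sub_U m t hmt] at h6
  simpa [inv_smul_smul₀ (by norm_num : (6 : ℂ) ≠ 0)] using S.smul_mem (6⁻¹ : ℂ) h6

theorem pderiv_mem_of_U_mem_of_V_mem (hU : U n ∈ S) (hV : V n ∈ S) (j : Fin n) :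
    pderiv j ∈ S := by
  induction j using WellFoundedGT.induction with
  | _ m ih =>
    by_cases hm : (m : ℕ) + 1 < n
    · have ht := ih ⟨m + 1, hm⟩ (Fin.lt_def.mpr (Nat.lt_succ_self m))
      have htail := der_tail_prod_mem_of_pderiv_mem hU hV m _ rfl ht
      rw [der] at htail
      refine pderiv_mem_of_mkDerivation_prod_X_mem _ (fun j hj => ih j ?_) htail
      exact Fin.lt_def.mpr (Finset.mem_filter.mp hj).2
    · rw [← U_eq_pderiv m (by omega)]
      exact hU

end SubalgebraContainingUV

theorem tail_product_shear_mem_lieSpan_UVW_general (n : ℕ) (i : Fin n)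
    (hi : 1 ≤ (i : ℕ)) :
    der n (∏ j ∈ Finset.univ.filter (fun j : Fin n => (i : ℕ) ≤ (j : ℕ)), X j)
        (⟨(i : ℕ) - 1, lt_of_le_of_lt (Nat.sub_le _ _) i.isLt⟩ : Fin n) ∈
      LieSubalgebra.lieSpan ℂ (Derivation ℂ (MvPolynomial (Fin n) ℂ) (MvPolynomial (Fin n) ℂ))
        {U n, V n, W n} := by
  have hU : U n ∈ LieSubalgebra.lieSpan ℂ _ {U n, V n, W n} :=
    LieSubalgebra.subset_lieSpan (by simp)
  have hV : V n ∈ LieSubalgebra.lieSpan ℂ _ {U n, V n, W n} :=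
    LieSubalgebra.subset_lieSpan (by simp)
  exact der_tail_prod_mem_of_pderiv_mem hU hV _ i (Nat.sub_add_cancel hi).symm
    (pderiv_mem_of_U_mem_of_V_mem hU hV i)

/-- For every `n ≥ 2` and every `k` with `2 ≤ k ≤ n`, the derivation
`zₙ z_{n−1} ⋯ zₖ ∂/∂z_{k−1}` lies in the smallest Lie subalgebra of the derivations of
`ℂ[z₁,…,zₙ]` containing `U`, `V`, `W`.  (`0`-indexed: for `i = k − 1 ≥ 1` the field is
`(∏_{j ≥ i} X j) ∂/∂(X (i−1))`.) -/
theorem tail_product_shear_mem_lieSpan_UVW (n : ℕ) (hn : 2 ≤ n) (i : Fin n)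
    (hi : 1 ≤ (i : ℕ)) :
    der n (∏ j ∈ Finset.univ.filter (fun j : Fin n => (i : ℕ) ≤ (j : ℕ)), X j)
        (⟨(i : ℕ) - 1, lt_of_le_of_lt (Nat.sub_le _ _) i.isLt⟩ : Fin n) ∈
      LieSubalgebra.lieSpan ℂ (Derivation ℂ (MvPolynomial (Fin n) ℂ) (MvPolynomial (Fin n) ℂ))
        {U n, V n, W n} :=
  tail_product_shear_mem_lieSpan_UVW_general n i hi
end

section
/- For every n ≥ 2, the iterated commutators of U with V satisfy ⁅U, ⁅U, V⁆⁆ = 6 zₙ ∂/∂z_{n−1} and ⁅U, ⁅U, ⁅U, V⁆⁆⁆ = 6 ∂/∂z_{n−1} in the Lie algebra of derivations of ℂ[z₁,…,zₙ]. -/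
open MvPolynomial

lemma U_eq_pderiv_s10 (n : ℕ) (hn : 1 ≤ n) : U n = pderiv (⟨n - 1, by omega⟩ : Fin n) := by
  apply derivation_ext
  intro i
  simp only [U, mkDerivation_X]
  rcases eq_or_ne i (⟨n - 1, by omega⟩ : Fin n) with h | h
  · subst h
    rw [pderiv_X_self, if_pos rfl]
  · rw [pderiv_X_of_ne h, if_neg (fun hh => h (Fin.ext hh))]

lemma pderiv_prod_X_notmem {n : ℕ} (k : Fin n) (t : Finset (Fin n)) (hk : k ∉ t) :
    pderiv k (∏ j ∈ t, (X j : MvPolynomial (Fin n) ℂ)) = 0 := by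
  classical
  induction t using Finset.induction_on with
  | empty => simp
  | @insert a s ha ih =>
    rw [Finset.prod_insert ha, Derivation.leibniz]
    have hak : a ≠ k := by rintro rfl; exact hk (Finset.mem_insert_self a s)
    rw [pderiv_X_of_ne hak, ih (fun h => hk (Finset.mem_insert_of_mem h))]
    simp

lemma pderiv_prod_X_mem {n : ℕ} (k : Fin n) (t : Finset (Fin n)) (hk : k ∈ t) :
    pderiv k (∏ j ∈ t, (X j : MvPolynomial (Fin n) ℂ)) = ∏ j ∈ t.erase k, X j := by
  classical
  rw [← Finset.mul_prod_erase t _ hk, Derivation.leibniz, pderiv_X_self,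
    pderiv_prod_X_notmem k _ (Finset.notMem_erase k t)]
  simp

set_option maxHeartbeats 1000000 in
/-- For every `n ≥ 2`: `⁅U, ⁅U, V⁆⁆ = 6 zₙ ∂/∂z_{n−1}` and
`⁅U, ⁅U, ⁅U, V⁆⁆⁆ = 6 ∂/∂z_{n−1}`. -/
theorem bracket_U_U_V (n : ℕ) (hn : 2 ≤ n) :
    ⁅U n, ⁅U n, V n⁆⁆ = der n (6 * X (⟨n - 1, by omega⟩ : Fin n)) (⟨n - 2, by omega⟩ : Fin n) ∧
    ⁅U n, ⁅U n, ⁅U n, V n⁆⁆⁆ = der n 6 (⟨n - 2, by omega⟩ : Fin n) := by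
  set k1 : Fin n := ⟨n - 1, by omega⟩ with hk1
  set k2 : Fin n := ⟨n - 2, by omega⟩ with hk2
  have hk12 : k2 ≠ k1 := by
    simp only [hk1, hk2, ne_eq, Fin.mk.injEq]; omega
  rw [U_eq_pderiv_s10 n (by omega : 1 ≤ n)]
  set D : Derivation ℂ (MvPolynomial (Fin n) ℂ) (MvPolynomial (Fin n) ℂ) := pderiv k1 with hD
  have hDX : ∀ i : Fin n, D (X i) = if i = k1 then 1 else 0 := by
    intro i
    rw [hD]
    split
    · rename_i h; subst h; exact pderiv_X_self k1
    · rename_i h; exact pderiv_X_of_ne h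
  have hVX : ∀ i : Fin n, V n (X i) =
      if h : (i : ℕ) + 1 < n then
        (∏ j ∈ Finset.univ.filter (fun j : Fin n => (i : ℕ) + 1 < (j : ℕ)), X j) *
          (X (⟨(i : ℕ) + 1, h⟩ : Fin n)) ^ 3
      else 1 := by
    intro i
    simp only [V, mkDerivation_X]
  have hDDVX : ∀ i : Fin n, D (D (V n (X i))) = if i = k2 then 6 * X k1 else 0 := by
    intro i
    rcases eq_or_ne i k2 with h2 | h2
    · subst h2
      rw [if_pos rfl]
      have h : (k2 : ℕ) + 1 < n := by simp only [hk2]; omega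
      have hfin : (⟨(k2 : ℕ) + 1, h⟩ : Fin n) = k1 := by
        simp only [hk1, hk2, Fin.mk.injEq]; omega
      have hempty : (Finset.univ.filter (fun j : Fin n => (k2 : ℕ) + 1 < (j : ℕ))) = ∅ := by
        apply Finset.eq_empty_of_forall_notMem
        intro j hj
        rw [Finset.mem_filter] at hj
        have h1 := hj.2
        have h2 := j.isLt
        have h3 : (k2 : ℕ) = n - 2 := rfl
        omega
      rw [hVX k2, dif_pos h, hfin, hempty, Finset.prod_empty, one_mul]
      rw [Derivation.leibniz_pow, hD, pderiv_X_self, smul_eq_mul, mul_one]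
      rw [← hD, D.map_smul_of_tower (3 : ℕ), Derivation.leibniz_pow, hD, pderiv_X_self,
        smul_eq_mul, mul_one, smul_smul]
      norm_num [nsmul_eq_mul]
    · rw [if_neg h2]
      by_cases h : (i : ℕ) + 1 < n - 1
      · have hmem : k1 ∈ Finset.univ.filter (fun j : Fin n => (i : ℕ) + 1 < (j : ℕ)) := by
          simp only [Finset.mem_filter, Finset.mem_univ, true_and, hk1]
          omega
        rw [hVX i, dif_pos (by omega : (i : ℕ) + 1 < n)]
        set m : Fin n := ⟨(i : ℕ) + 1, by omega⟩ with hm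
        have hne : m ≠ k1 := by
          simp only [hm, hk1, ne_eq, Fin.mk.injEq]; omega
        have hdm : D (X m) = 0 := by rw [hD]; exact pderiv_X_of_ne hne
        generalize hP : (∏ j ∈ Finset.univ.filter (fun j : Fin n => (i : ℕ) + 1 < (j : ℕ)),
          (X j : MvPolynomial (Fin n) ℂ)) = P
        obtain ⟨Q, hQ⟩ : ∃ Q, (∏ j ∈ (Finset.univ.filter
            (fun j : Fin n => (i : ℕ) + 1 < (j : ℕ))).erase k1,
            (X j : MvPolynomial (Fin n) ℂ)) = Q := ⟨_, rfl⟩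
        have hd2 : D Q = 0 := by
          rw [hD, ← hQ]
          exact pderiv_prod_X_notmem k1 _ (Finset.notMem_erase k1 _)
        have hd1 : D P = Q := by
          rw [hD, ← hP, ← hQ]
          exact pderiv_prod_X_mem k1 _ hmem
        have hstep : D (P * X m ^ 3) = X m ^ 3 * Q := by
          rw [Derivation.leibniz, Derivation.leibniz_pow, hdm, hd1]
          rw [smul_zero, smul_zero, smul_zero, zero_add, smul_eq_mul]
        have hstep2 : D (X m ^ 3 * Q) = 0 := by
          rw [Derivation.leibniz, Derivation.leibniz_pow, hdm, hd2]
          simp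
        rw [hstep, hstep2]
      · have hi : (i : ℕ) = n - 1 := by
          have := i.isLt
          have h2' : (i : ℕ) ≠ n - 2 := fun hh => h2 (Fin.ext hh)
          omega
        rw [hVX i, dif_neg (by omega : ¬ (i : ℕ) + 1 < n), Derivation.map_one_eq_zero, map_zero]
  have hder : ∀ (f : MvPolynomial (Fin n) ℂ) (i : Fin n),
      der n f k2 (X i) = if i = k2 then f else 0 := by
    intro f i
    simp only [der, mkDerivation_X]
    rcases eq_or_ne i k2 with h | h
    · subst h; rw [if_pos rfl, Pi.single_eq_same]
    · rw [if_neg h, Pi.single_eq_of_ne h]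
  have part1 : ⁅D, ⁅D, V n⁆⁆ = der n (6 * X k1) k2 := by
    apply derivation_ext
    intro i
    simp only [Derivation.commutator_apply, map_sub]
    rw [hder]
    have hVD : V n (D (X i)) = 0 := by
      rw [hDX]
      split
      · exact Derivation.map_one_eq_zero _
      · exact map_zero _
    have hDD : D (D (X i)) = 0 := by
      rw [hDX]
      split
      · exact Derivation.map_one_eq_zero _
      · exact map_zero _
    rw [hVD, map_zero, sub_zero, hDD, map_zero, hDDVX i]
    split <;> simp
  refine ⟨part1, ?_⟩
  rw [part1]
  apply derivation_ext
  intro i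
  simp only [Derivation.commutator_apply]
  rw [hder, hder]
  have hdD : der n (6 * X k1) k2 (D (X i)) = 0 := by
    rw [hDX]
    split
    · exact Derivation.map_one_eq_zero _
    · exact map_zero _
  rw [hdD, sub_zero]
  rcases eq_or_ne i k2 with h | h
  · rw [if_pos h, if_pos h]
    have h6 : (6 : MvPolynomial (Fin n) ℂ) * X k1 = (6 : ℕ) • X k1 := by
      rw [nsmul_eq_mul]; norm_num
    rw [h6, D.map_smul_of_tower (6 : ℕ), hDX, if_pos rfl]
    rw [nsmul_eq_mul, mul_one]; norm_num
  · rw [if_neg h, if_neg h, map_zero]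
end
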